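/- arXiv:1008.1398 — 7 statements merged into one kernel-verified Lean document; each statement's English description precedes it below -/
import Mathlib

section
/- Let l, n ≥ 1 be integers, m = l + n, μ > 0, and let K be a real m×m matrix. Let σ = (σ₁,…,σ_m) be independent random variables taking the value +1 with probability p, −1 with probability p, and 0 with probability 1 − 2p, where p = l·n/(l+n)². Then (1/l + 1/n) · E[ sup_{α ∈ ℝ^m, ‖α‖₂ ≤ μ} Σ_{i=1}^m σ_i (Kα)_i ] ≤ √(2μ²‖K‖²_Fro/(l·n)), where ‖K‖_Fro denotes the Frobenius norm of K. -/
open Matrix Finset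

lemma sSup_lin {m : ℕ} (μ : ℝ) (hμ : 0 < μ) (c : Fin m → ℝ) :
    sSup {x : ℝ | ∃ α : Fin m → ℝ,
        Real.sqrt (∑ i, (α i) ^ 2) ≤ μ ∧ x = ∑ j, c j * α j} =
      μ * Real.sqrt (∑ j, (c j) ^ 2) := by
  set S := ∑ j, (c j) ^ 2 with hSdef
  have hS0 : 0 ≤ S := Finset.sum_nonneg fun _ _ => sq_nonneg _
  have hub : ∀ x ∈ {x : ℝ | ∃ α : Fin m → ℝ,
      Real.sqrt (∑ i, (α i) ^ 2) ≤ μ ∧ x = ∑ j, c j * α j},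
      x ≤ μ * Real.sqrt S := by
    rintro x ⟨α, hα, rfl⟩
    have hA0 : (0:ℝ) ≤ ∑ i, (α i) ^ 2 := Finset.sum_nonneg fun _ _ => sq_nonneg _
    have h1 : (∑ j, c j * α j) ^ 2 ≤ S * (∑ i, (α i) ^ 2) :=
      Finset.sum_mul_sq_le_sq_mul_sq _ _ _
    calc ∑ j, c j * α j ≤ |∑ j, c j * α j| := le_abs_self _
      _ = Real.sqrt ((∑ j, c j * α j) ^ 2) := (Real.sqrt_sq_eq_abs _).symm
      _ ≤ Real.sqrt (S * (∑ i, (α i) ^ 2)) := Real.sqrt_le_sqrt h1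
      _ = Real.sqrt S * Real.sqrt (∑ i, (α i) ^ 2) := Real.sqrt_mul hS0 _
      _ ≤ Real.sqrt S * μ := by
          exact mul_le_mul_of_nonneg_left hα (Real.sqrt_nonneg _)
      _ = μ * Real.sqrt S := mul_comm _ _
  rcases eq_or_lt_of_le hS0 with hS | hS
  · have hc : ∀ j, c j = 0 := by
      intro j
      have := (Finset.sum_eq_zero_iff_of_nonneg (fun i _ => sq_nonneg (c i))).mp hS.symm
      exact pow_eq_zero_iff (by norm_num) |>.mp (this j (mem_univ j))
    have hset : {x : ℝ | ∃ α : Fin m → ℝ,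
        Real.sqrt (∑ i, (α i) ^ 2) ≤ μ ∧ x = ∑ j, c j * α j} = {0} := by
      ext x
      simp only [Set.mem_setOf_eq, Set.mem_singleton_iff]
      constructor
      · rintro ⟨α, -, rfl⟩; simp [hc]
      · rintro rfl
        exact ⟨0, by simp [hμ.le], by simp⟩
    rw [hset, csSup_singleton, ← hS, Real.sqrt_zero, mul_zero]
  · have hsq : 0 < Real.sqrt S := Real.sqrt_pos.mpr hS
    apply le_antisymm
    · exact csSup_le ⟨0, 0, by simp [hμ.le], by simp⟩ hub
    · apply le_csSup ⟨μ * Real.sqrt S, hub⟩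
      refine ⟨fun j => (μ / Real.sqrt S) * c j, ?_, ?_⟩
      · have : ∑ i, ((μ / Real.sqrt S) * c i) ^ 2 = (μ / Real.sqrt S) ^ 2 * S := by
          rw [hSdef, Finset.mul_sum]
          exact Finset.sum_congr rfl fun i _ => by ring
        rw [this, Real.sqrt_mul (sq_nonneg _), Real.sqrt_sq (by positivity)]
        exact le_of_eq (by field_simp)
      · show μ * Real.sqrt S = ∑ j, c j * (μ / Real.sqrt S * c j)
        have : ∑ j, c j * (μ / Real.sqrt S * c j) = (μ / Real.sqrt S) * S := by
          rw [hSdef, Finset.mul_sum]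
          exact Finset.sum_congr rfl fun i _ => by ring
        rw [this, div_mul_eq_mul_div, eq_div_iff hsq.ne', mul_assoc,
          Real.mul_self_sqrt hS0]

lemma exp_pair {m : ℕ} (w v : Fin 3 → ℝ) (q : ℝ)
    (hw : ∑ x : Fin 3, w x = 1)
    (h1 : ∑ x : Fin 3, w x * v x = 0)
    (h2 : ∑ x : Fin 3, w x * v x ^ 2 = q)
    (i k : Fin m) :
    ∑ ω : Fin m → Fin 3, (∏ t, w (ω t)) * (v (ω i) * v (ω k)) =
      if i = k then q else 0 := by
  have key : ∀ ω : Fin m → Fin 3,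
      (∏ t, w (ω t)) * (v (ω i) * v (ω k)) =
      ∏ t, (w (ω t) * (if t = i then v (ω t) else 1) *
        (if t = k then v (ω t) else 1)) := by
    intro ω
    rw [Finset.prod_mul_distrib, Finset.prod_mul_distrib,
      Finset.prod_ite_eq' univ i (fun t => v (ω t)),
      Finset.prod_ite_eq' univ k (fun t => v (ω t))]
    simp [mul_assoc]
  simp_rw [key]
  have hps := Fintype.prod_sum (fun (t : Fin m) (x : Fin 3) =>
    (w x * if t = i then v x else 1) * (if t = k then v x else 1))
  rw [← hps]
  by_cases hik : i = k
  · subst hik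
    have hfac : ∀ t : Fin m, (∑ x : Fin 3, (w x * (if t = i then v x else 1) *
        (if t = i then v x else 1))) = if t = i then q else 1 := by
      intro t
      by_cases ht : t = i
      · subst ht
        rw [if_pos rfl, ← h2]
        refine Finset.sum_congr rfl fun x _ => ?_
        rw [if_pos rfl]; ring
      · simp [ht, hw]
    rw [Finset.prod_congr rfl fun t _ => hfac t,
      Finset.prod_ite_eq' univ i (fun _ => q)]
    simp
  · rw [if_neg hik]
    apply Finset.prod_eq_zero (Finset.mem_univ i)
    rw [← h1]
    apply Finset.sum_congr rfl fun x _ => ?_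
    rw [if_pos rfl, if_neg hik, mul_one]

/-- Bound on the transductive Rademacher complexity of the ULD hypothesis class
`{Kα : ‖α‖₂ ≤ μ}`.  The expectation over the random sign vector `σ` (entries
`+1` with probability `p`, `-1` with probability `p`, `0` with probability
`1 - 2p`, independently, `p = l·n/(l+n)²`) is written out explicitly as a sum
over the finite product sample space `Fin (l+n) → Fin 3`, where `v` maps an
outcome to its value and `w` to its probability. -/
theorem stmt_2 (l n : ℕ) (hl : 1 ≤ l) (hn : 1 ≤ n) (μ : ℝ) (hμ : 0 < μ)
    (K : Matrix (Fin (l + n)) (Fin (l + n)) ℝ)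
    (p : ℝ) (hp : p = ((l : ℝ) * (n : ℝ)) / ((l : ℝ) + (n : ℝ)) ^ 2)
    (v : Fin 3 → ℝ) (hv0 : v 0 = 1) (hv1 : v 1 = -1) (hv2 : v 2 = 0)
    (w : Fin 3 → ℝ) (hw0 : w 0 = p) (hw1 : w 1 = p) (hw2 : w 2 = 1 - 2 * p) :
    ((1 / (l : ℝ)) + 1 / (n : ℝ)) *
        ∑ ω : Fin (l + n) → Fin 3,
          (∏ i, w (ω i)) *
            sSup {x : ℝ | ∃ α : Fin (l + n) → ℝ,
              Real.sqrt (∑ i, (α i) ^ 2) ≤ μ ∧ x = ∑ i, v (ω i) * (K *ᵥ α) i} ≤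
      Real.sqrt (2 * μ ^ 2 * (∑ i, ∑ j, (K i j) ^ 2) / ((l : ℝ) * (n : ℝ))) := by
  have hl0 : (0:ℝ) < l := by exact_mod_cast hl
  have hn0 : (0:ℝ) < n := by exact_mod_cast hn
  have hln : (0:ℝ) < (l:ℝ) + n := by linarith
  -- basic facts about p and w
  have hp0 : 0 < p := by rw [hp]; positivity
  have hp2 : 2 * p ≤ 1 := by
    rw [hp, mul_div_assoc', div_le_one (by positivity)]
    nlinarith [sq_nonneg ((l:ℝ) - n)]
  have hwnn : ∀ x : Fin 3, 0 ≤ w x := by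
    intro x; fin_cases x <;> simp [hw0, hw1, hw2] <;> linarith
  have hwsum : ∑ x : Fin 3, w x = 1 := by
    rw [Fin.sum_univ_three, hw0, hw1, hw2]; ring
  have hwv : ∑ x : Fin 3, w x * v x = 0 := by
    rw [Fin.sum_univ_three, hw0, hw1, hw2, hv0, hv1, hv2]; ring
  have hwv2 : ∑ x : Fin 3, w x * v x ^ 2 = 2 * p := by
    rw [Fin.sum_univ_three, hw0, hw1, hw2, hv0, hv1, hv2]; ring
  -- the vector c and the quadratic form Q
  set c : (Fin (l + n) → Fin 3) → Fin (l + n) → ℝ := fun ω j => ∑ i, v (ω i) * K i j with hc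
  set Q : (Fin (l + n) → Fin 3) → ℝ := fun ω => ∑ j, (c ω j) ^ 2 with hQdef
  have hQ0 : ∀ ω, 0 ≤ Q ω := fun ω => Finset.sum_nonneg fun _ _ => sq_nonneg _
  have hW0 : ∀ ω : Fin (l + n) → Fin 3, 0 ≤ ∏ t, w (ω t) :=
    fun ω => Finset.prod_nonneg fun t _ => hwnn _
  -- rewrite each sSup
  have hsupeq : ∀ ω : Fin (l + n) → Fin 3,
      sSup {x : ℝ | ∃ α : Fin (l + n) → ℝ,
        Real.sqrt (∑ i, (α i) ^ 2) ≤ μ ∧ x = ∑ i, v (ω i) * (K *ᵥ α) i} =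
      μ * Real.sqrt (Q ω) := by
    intro ω
    have hswap : ∀ α : Fin (l + n) → ℝ,
        ∑ i, v (ω i) * (K *ᵥ α) i = ∑ j, c ω j * α j := by
      intro α
      simp only [Matrix.mulVec, dotProduct, hc]
      calc ∑ i, v (ω i) * ∑ j, K i j * α j
          = ∑ i : Fin (l + n), ∑ j, v (ω i) * K i j * α j := by
            refine Finset.sum_congr rfl fun i _ => ?_
            rw [Finset.mul_sum]
            exact Finset.sum_congr rfl fun j _ => by ring
        _ = ∑ j : Fin (l + n), ∑ i, v (ω i) * K i j * α j := Finset.sum_comm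
        _ = ∑ j, (∑ i, v (ω i) * K i j) * α j := by
            refine Finset.sum_congr rfl fun j _ => ?_
            rw [Finset.sum_mul]
    have hseteq : {x : ℝ | ∃ α : Fin (l + n) → ℝ,
        Real.sqrt (∑ i, (α i) ^ 2) ≤ μ ∧ x = ∑ i, v (ω i) * (K *ᵥ α) i} =
        {x : ℝ | ∃ α : Fin (l + n) → ℝ,
        Real.sqrt (∑ i, (α i) ^ 2) ≤ μ ∧ x = ∑ j, c ω j * α j} := by
      ext x
      constructor
      · rintro ⟨α, h1, h2⟩; exact ⟨α, h1, by rw [h2, hswap]⟩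
      · rintro ⟨α, h1, h2⟩; exact ⟨α, h1, by rw [h2, ← hswap]⟩
    rw [hseteq, sSup_lin μ hμ (c ω)]
  -- total mass one
  have hmass : ∑ ω : Fin (l + n) → Fin 3, ∏ t, w (ω t) = 1 := by
    have := (Fintype.prod_sum (fun (_ : Fin (l + n)) (x : Fin 3) => w x)).symm
    rw [this, hwsum]
    simp
  -- second moment
  have hsecond : ∑ ω : Fin (l + n) → Fin 3, (∏ t, w (ω t)) * Q ω =
      2 * p * (∑ i, ∑ j, (K i j) ^ 2) := by
    calc ∑ ω : Fin (l + n) → Fin 3, (∏ t, w (ω t)) * Q ω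
        = ∑ ω : Fin (l + n) → Fin 3, ∑ j, ∑ i, ∑ k,
            K i j * K k j * ((∏ t, w (ω t)) * (v (ω i) * v (ω k))) := by
          refine Finset.sum_congr rfl fun ω _ => ?_
          rw [hQdef, Finset.mul_sum]
          refine Finset.sum_congr rfl fun j _ => ?_
          rw [hc]
          rw [sq, Finset.sum_mul_sum, Finset.mul_sum]
          refine Finset.sum_congr rfl fun i _ => ?_
          rw [Finset.mul_sum]
          refine Finset.sum_congr rfl fun k _ => ?_
          ring
      _ = ∑ j, ∑ i, ∑ k, K i j * K k j *
            (∑ ω : Fin (l + n) → Fin 3, (∏ t, w (ω t)) * (v (ω i) * v (ω k))) := by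
          rw [Finset.sum_comm]
          refine Finset.sum_congr rfl fun j _ => ?_
          rw [Finset.sum_comm]
          refine Finset.sum_congr rfl fun i _ => ?_
          rw [Finset.sum_comm]
          refine Finset.sum_congr rfl fun k _ => ?_
          rw [← Finset.mul_sum]
      _ = ∑ j, ∑ i, ∑ k, K i j * K k j * (if i = k then 2 * p else 0) := by
          refine Finset.sum_congr rfl fun j _ => Finset.sum_congr rfl fun i _ =>
            Finset.sum_congr rfl fun k _ => ?_
          rw [exp_pair w v (2 * p) hwsum hwv hwv2 i k]
      _ = ∑ j, ∑ i, K i j ^ 2 * (2 * p) := by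
          refine Finset.sum_congr rfl fun j _ => Finset.sum_congr rfl fun i _ => ?_
          simp only [mul_ite, mul_zero]
          rw [Finset.sum_ite_eq univ i (fun k => K i j * K k j * (2 * p))]
          simp [sq]
      _ = 2 * p * (∑ i, ∑ j, (K i j) ^ 2) := by
          rw [Finset.sum_comm]
          rw [Finset.mul_sum]
          refine Finset.sum_congr rfl fun i _ => ?_
          rw [Finset.mul_sum]
          exact Finset.sum_congr rfl fun j _ => by ring
  set S := ∑ i, ∑ j, (K i j) ^ 2 with hSdef
  have hS0 : 0 ≤ S := Finset.sum_nonneg fun _ _ => Finset.sum_nonneg fun _ _ => sq_nonneg _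
  -- Cauchy-Schwarz over the sample space
  have hCS : ∑ ω : Fin (l + n) → Fin 3, (∏ t, w (ω t)) * Real.sqrt (Q ω) ≤
      Real.sqrt (2 * p * S) := by
    have key : (∑ ω : Fin (l + n) → Fin 3, (∏ t, w (ω t)) * Real.sqrt (Q ω)) ^ 2 ≤
        (∑ ω : Fin (l + n) → Fin 3, ∏ t, w (ω t)) *
        (∑ ω : Fin (l + n) → Fin 3, (∏ t, w (ω t)) * Q ω) := by
      have h := Finset.sum_mul_sq_le_sq_mul_sq univ
        (fun ω : Fin (l + n) → Fin 3 => Real.sqrt (∏ t, w (ω t)))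
        (fun ω : Fin (l + n) → Fin 3 => Real.sqrt (∏ t, w (ω t)) * Real.sqrt (Q ω))
      have e1 : ∀ ω : Fin (l + n) → Fin 3, Real.sqrt (∏ t, w (ω t)) *
          (Real.sqrt (∏ t, w (ω t)) * Real.sqrt (Q ω)) =
          (∏ t, w (ω t)) * Real.sqrt (Q ω) := by
        intro ω; rw [← mul_assoc, Real.mul_self_sqrt (hW0 ω)]
      have e2 : ∀ ω : Fin (l + n) → Fin 3, Real.sqrt (∏ t, w (ω t)) ^ 2 = ∏ t, w (ω t) :=
        fun ω => Real.sq_sqrt (hW0 ω)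
      have e3 : ∀ ω : Fin (l + n) → Fin 3, (Real.sqrt (∏ t, w (ω t)) * Real.sqrt (Q ω)) ^ 2 =
          (∏ t, w (ω t)) * Q ω := by
        intro ω
        rw [mul_pow, Real.sq_sqrt (hW0 ω), Real.sq_sqrt (hQ0 ω)]
      calc (∑ ω : Fin (l + n) → Fin 3, (∏ t, w (ω t)) * Real.sqrt (Q ω)) ^ 2
          = (∑ ω : Fin (l + n) → Fin 3, Real.sqrt (∏ t, w (ω t)) *
              (Real.sqrt (∏ t, w (ω t)) * Real.sqrt (Q ω))) ^ 2 := by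
            rw [Finset.sum_congr rfl fun ω _ => (e1 ω).symm]
        _ ≤ (∑ ω : Fin (l + n) → Fin 3, Real.sqrt (∏ t, w (ω t)) ^ 2) *
            (∑ ω : Fin (l + n) → Fin 3, (Real.sqrt (∏ t, w (ω t)) * Real.sqrt (Q ω)) ^ 2) := h
        _ = (∑ ω : Fin (l + n) → Fin 3, ∏ t, w (ω t)) *
            (∑ ω : Fin (l + n) → Fin 3, (∏ t, w (ω t)) * Q ω) := by
            rw [Finset.sum_congr rfl fun ω _ => e2 ω,
              Finset.sum_congr rfl fun ω _ => e3 ω]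
    rw [hmass, one_mul, hsecond] at key
    have hnn : 0 ≤ ∑ ω : Fin (l + n) → Fin 3, (∏ t, w (ω t)) * Real.sqrt (Q ω) :=
      Finset.sum_nonneg fun ω _ => mul_nonneg (hW0 ω) (Real.sqrt_nonneg _)
    calc ∑ ω : Fin (l + n) → Fin 3, (∏ t, w (ω t)) * Real.sqrt (Q ω)
        = Real.sqrt ((∑ ω : Fin (l + n) → Fin 3, (∏ t, w (ω t)) * Real.sqrt (Q ω)) ^ 2) :=
          (Real.sqrt_sq hnn).symm
      _ ≤ Real.sqrt (2 * p * S) := Real.sqrt_le_sqrt key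
  -- put everything together
  have hC : (0:ℝ) < 1 / (l:ℝ) + 1 / (n:ℝ) := by positivity
  have hrw : (∑ ω : Fin (l + n) → Fin 3,
      (∏ i, w (ω i)) *
        sSup {x : ℝ | ∃ α : Fin (l + n) → ℝ,
          Real.sqrt (∑ i, (α i) ^ 2) ≤ μ ∧ x = ∑ i, v (ω i) * (K *ᵥ α) i}) =
      μ * ∑ ω : Fin (l + n) → Fin 3, (∏ t, w (ω t)) * Real.sqrt (Q ω) := by
    rw [Finset.mul_sum]
    refine Finset.sum_congr rfl fun ω _ => ?_
    rw [hsupeq ω]; ring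
  rw [hrw]
  have hb : (1 / (l:ℝ) + 1 / (n:ℝ)) *
      (μ * ∑ ω : Fin (l + n) → Fin 3, (∏ t, w (ω t)) * Real.sqrt (Q ω)) ≤
      (1 / (l:ℝ) + 1 / (n:ℝ)) * (μ * Real.sqrt (2 * p * S)) := by
    apply mul_le_mul_of_nonneg_left _ hC.le
    exact mul_le_mul_of_nonneg_left hCS hμ.le
  refine hb.trans (le_of_eq ?_)
  rw [show 2 * μ ^ 2 * S / ((l:ℝ) * n) =
      ((1 / (l:ℝ) + 1 / (n:ℝ)) * μ) ^ 2 * (2 * p * S) from by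
    rw [hp]; field_simp; ring]
  rw [Real.sqrt_mul (sq_nonneg _), Real.sqrt_sq (by positivity)]
  ring
end

section
/- Let G be a real symmetric m×m matrix, b ∈ ℝ^m, s > 0, and λ ∈ ℝ. Suppose z* ∈ ℝ^m satisfies (G − λI)z* = b, ‖z*‖₂ = s, and G − λI is positive semidefinite. Then for every z ∈ ℝ^m with ‖z‖₂ = s, one has (z*)ᵀGz* − 2bᵀz* ≤ zᵀGz − 2bᵀz; that is, z* is a global minimizer of zᵀGz − 2bᵀz over the sphere {z : ‖z‖₂ = s}. -/
open Matrix

/-- Gander–Golub–von Matt global optimality condition for the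
sphere-constrained quadratic problem: if `(G − λI)zstar = b`, `‖zstar‖₂ = s`
and `G − λI ⪰ 0`, then `zstar` globally minimizes `zᵀGz − 2bᵀz` over the
sphere `{z : ‖z‖₂ = s}`. -/
theorem stmt_10 (m : ℕ) (G : Matrix (Fin m) (Fin m) ℝ) (hG : G.IsSymm)
    (b zstar : Fin m → ℝ) (s : ℝ) (hs : 0 < s) (lam : ℝ)
    (hstat : (G - lam • (1 : Matrix (Fin m) (Fin m) ℝ)) *ᵥ zstar = b)
    (hnorm : Real.sqrt (∑ i, (zstar i) ^ 2) = s)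
    (hpsd : (G - lam • (1 : Matrix (Fin m) (Fin m) ℝ)).PosSemidef) :
    ∀ z : Fin m → ℝ, Real.sqrt (∑ i, (z i) ^ 2) = s →
      zstar ⬝ᵥ (G *ᵥ zstar) - 2 * (b ⬝ᵥ zstar) ≤ z ⬝ᵥ (G *ᵥ z) - 2 * (b ⬝ᵥ z) := by
  intro z hz
  set A : Matrix (Fin m) (Fin m) ℝ := G - lam • (1 : Matrix (Fin m) (Fin m) ℝ) with hA
  -- norms squared
  have hsumz : ∑ i, (z i) ^ 2 = s ^ 2 := by
    have h0 : (0:ℝ) ≤ ∑ i, (z i) ^ 2 := Finset.sum_nonneg fun i _ => sq_nonneg _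
    have := Real.sq_sqrt h0
    rw [hz] at this; linarith
  have hsumzs : ∑ i, (zstar i) ^ 2 = s ^ 2 := by
    have h0 : (0:ℝ) ≤ ∑ i, (zstar i) ^ 2 := Finset.sum_nonneg fun i _ => sq_nonneg _
    have := Real.sq_sqrt h0
    rw [hnorm] at this; linarith
  have hAsymm : Aᵀ = A := by
    rw [hA]; simp [Matrix.transpose_sub, Matrix.transpose_smul, hG.eq]
  -- self-dot as sum of squares
  have hdotz : z ⬝ᵥ z = s ^ 2 := by
    simp only [dotProduct, ← hsumz]
    exact Finset.sum_congr rfl fun i _ => (sq (z i)).symm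
  have hdotzs : zstar ⬝ᵥ zstar = s ^ 2 := by
    simp only [dotProduct, ← hsumzs]
    exact Finset.sum_congr rfl fun i _ => (sq (zstar i)).symm
  -- G = A + lam • 1
  have hGz : ∀ w : Fin m → ℝ, G *ᵥ w = A *ᵥ w + lam • w := by
    intro w
    rw [hA]
    simp [Matrix.sub_mulVec, Matrix.smul_mulVec]
  have hsymmdot : ∀ v w : Fin m → ℝ, v ⬝ᵥ (A *ᵥ w) = w ⬝ᵥ (A *ᵥ v) := by
    intro v w
    rw [Matrix.dotProduct_mulVec, ← Matrix.mulVec_transpose, hAsymm, dotProduct_comm]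
  have hb : ∀ v : Fin m → ℝ, b ⬝ᵥ v = zstar ⬝ᵥ (A *ᵥ v) := by
    intro v
    rw [← hstat, dotProduct_comm, hsymmdot]
  -- PSD inequality
  have hpos : 0 ≤ (z - zstar) ⬝ᵥ (A *ᵥ (z - zstar)) := by
    have := hpsd.dotProduct_mulVec_nonneg (z - zstar)
    simpa using this
  have hexp : (z - zstar) ⬝ᵥ (A *ᵥ (z - zstar)) =
      z ⬝ᵥ (A *ᵥ z) - 2 * (zstar ⬝ᵥ (A *ᵥ z)) + zstar ⬝ᵥ (A *ᵥ zstar) := by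
    rw [Matrix.mulVec_sub, sub_dotProduct, dotProduct_sub, dotProduct_sub,
      hsymmdot z zstar]
    ring
  have hzG : z ⬝ᵥ (G *ᵥ z) = z ⬝ᵥ (A *ᵥ z) + lam * s ^ 2 := by
    rw [hGz, dotProduct_add, dotProduct_smul, hdotz]; simp [mul_comm]
  have hzsG : zstar ⬝ᵥ (G *ᵥ zstar) = zstar ⬝ᵥ (A *ᵥ zstar) + lam * s ^ 2 := by
    rw [hGz, dotProduct_add, dotProduct_smul, hdotzs]; simp [mul_comm]
  have hbz := hb z
  have hbzs := hb zstar
  rw [hzG, hzsG, hbz, hbzs]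
  linarith [hpos, hexp.symm.le, hexp.le]
end

section
/- Let C and P be real symmetric m×m matrices with P positive definite, let b ∈ ℝ^m, s > 0, and ζ ∈ ℝ. Suppose α* ∈ ℝ^m satisfies (C − ζP)α* = b, (α*)ᵀPα* = s², and C − ζP is positive semidefinite. Then for every α ∈ ℝ^m with αᵀPα = s², one has (α*)ᵀCα* − 2bᵀα* ≤ αᵀCα − 2bᵀα; that is, α* is a global minimizer of αᵀCα − 2bᵀα over the ellipsoid {α : αᵀPα = s²}. -/
open Matrix

/-- Ellipsoid-constrained generalization of the Gander–Golub–von Matt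
optimality condition, as used by LS-KPCA: if `(C − ζP)αstar = b`,
`αstarᵀPαstar = s²` and `C − ζP ⪰ 0`, then `αstar` globally minimizes
`αᵀCα − 2bᵀα` over the ellipsoid `{α : αᵀPα = s²}`. -/
theorem stmt_11 (m : ℕ) (C P : Matrix (Fin m) (Fin m) ℝ)
    (hC : C.IsSymm) (hP : P.IsSymm) (hPpd : P.PosDef)
    (b αstar : Fin m → ℝ) (s : ℝ) (hs : 0 < s) (ζ : ℝ)
    (hstat : (C - ζ • P) *ᵥ αstar = b)
    (hconstr : αstar ⬝ᵥ (P *ᵥ αstar) = s ^ 2)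
    (hpsd : (C - ζ • P).PosSemidef) :
    ∀ α : Fin m → ℝ, α ⬝ᵥ (P *ᵥ α) = s ^ 2 →
      αstar ⬝ᵥ (C *ᵥ αstar) - 2 * (b ⬝ᵥ αstar) ≤ α ⬝ᵥ (C *ᵥ α) - 2 * (b ⬝ᵥ α) := by
  intro α hα
  set M : Matrix (Fin m) (Fin m) ℝ := C - ζ • P with hM
  have hMsymm : M.IsSymm := by
    simp [Matrix.IsSymm, hM, Matrix.transpose_sub, Matrix.transpose_smul, hC.eq, hP.eq]
  have key := hpsd.dotProduct_mulVec_nonneg (α - αstar)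
  -- cross terms: x ⬝ᵥ M *ᵥ y = y ⬝ᵥ M *ᵥ x
  have cross : ∀ x y : Fin m → ℝ, x ⬝ᵥ (M *ᵥ y) = y ⬝ᵥ (M *ᵥ x) := by
    intro x y
    rw [Matrix.dotProduct_mulVec, ← Matrix.mulVec_transpose, hMsymm.eq,
      dotProduct_comm]
  -- expand key
  have hexp : (α - αstar) ⬝ᵥ (M *ᵥ (α - αstar))
      = α ⬝ᵥ (M *ᵥ α) - 2 * (α ⬝ᵥ (M *ᵥ αstar)) + αstar ⬝ᵥ (M *ᵥ αstar) := by
    have hc := cross α αstar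
    simp only [Matrix.mulVec_sub, dotProduct_sub, sub_dotProduct]
    linarith [hc]
  -- rewrite C in terms of M
  have hCM : ∀ x : Fin m → ℝ, x ⬝ᵥ (C *ᵥ x) = x ⬝ᵥ (M *ᵥ x) + ζ * (x ⬝ᵥ (P *ᵥ x)) := by
    intro x
    simp [hM, Matrix.sub_mulVec, dotProduct_sub, Matrix.smul_mulVec,
      dotProduct_smul, smul_eq_mul]
  have hb : ∀ x : Fin m → ℝ, b ⬝ᵥ x = x ⬝ᵥ (M *ᵥ αstar) := by
    intro x
    rw [← hstat, dotProduct_comm]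
  have hbs := hb αstar
  have hba := hb α
  have h1 := hCM α
  have h2 := hCM αstar
  have key' : 0 ≤ (α - αstar) ⬝ᵥ (M *ᵥ (α - αstar)) := by simpa using key
  rw [hexp] at key'
  rw [h1, h2, hbs, hba, hα, hconstr]
  linarith
end

section
/- Let G be a real symmetric m×m matrix, b ∈ ℝ^m, s > 0, and λ ∈ ℝ such that G − λI is invertible. Suppose z ∈ ℝ^m satisfies (G − λI)z = b and ‖z‖₂² = s². Then λ is an eigenvalue of the 2m×2m block matrix M = [[G, −I], [−(1/s²)·b·bᵀ, G]], with eigenvector (γ; η) where γ = (G − λI)⁻¹z and η = z. -/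
open Matrix

/-- The Lagrange multiplier of the sphere-constrained quadratic problem is an
eigenvalue of the 2m×2m block matrix `[[G, −I], [−(1/s²)bbᵀ, G]]`, with
eigenvector `(γ; η)` where `γ = (G − λI)⁻¹z` and `η = z`. -/
theorem stmt_12 (m : ℕ) (G : Matrix (Fin m) (Fin m) ℝ) (hG : G.IsSymm)
    (b z : Fin m → ℝ) (s : ℝ) (hs : 0 < s) (lam : ℝ)
    (hinv : IsUnit (G - lam • (1 : Matrix (Fin m) (Fin m) ℝ)))
    (hz : (G - lam • (1 : Matrix (Fin m) (Fin m) ℝ)) *ᵥ z = b)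
    (hnorm : ∑ i, (z i) ^ 2 = s ^ 2) :
    Matrix.fromBlocks G (-1) (-((1 / s ^ 2) • Matrix.vecMulVec b b)) G *ᵥ
        Sum.elim ((G - lam • (1 : Matrix (Fin m) (Fin m) ℝ))⁻¹ *ᵥ z) z =
      lam • Sum.elim ((G - lam • (1 : Matrix (Fin m) (Fin m) ℝ))⁻¹ *ᵥ z) z ∧
    Sum.elim ((G - lam • (1 : Matrix (Fin m) (Fin m) ℝ))⁻¹ *ᵥ z) z ≠ 0 := by
  set A := G - lam • (1 : Matrix (Fin m) (Fin m) ℝ) with hA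
  set γ := A⁻¹ *ᵥ z with hγ
  have hAinv : A * A⁻¹ = 1 := mul_nonsing_inv A ((isUnit_iff_isUnit_det A).mp hinv)
  have hAγ : A *ᵥ γ = z := by
    rw [hγ, mulVec_mulVec, hAinv, one_mulVec]
  -- A is symmetric
  have hAsymm : Aᵀ = A := by
    rw [hA, transpose_sub, transpose_smul, transpose_one, hG]
  -- b ⬝ᵥ γ = s ^ 2
  have hbγ : b ⬝ᵥ γ = s ^ 2 := by
    rw [← hz, ← hAsymm, mulVec_transpose, ← dotProduct_mulVec, hAγ]
    simpa [dotProduct, sq] using hnorm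
  have hGγ : G *ᵥ γ = z + lam • γ := by
    have : (G - lam • 1) *ᵥ γ = z := hAγ
    rw [sub_mulVec, smul_mulVec, one_mulVec, sub_eq_iff_eq_add] at this
    exact this
  have hGz : G *ᵥ z = b + lam • z := by
    have := hz
    rw [sub_mulVec, smul_mulVec, one_mulVec, sub_eq_iff_eq_add] at this
    exact this
  have hz0 : z ≠ 0 := by
    intro h
    rw [h] at hnorm
    simp at hnorm
    exact absurd hnorm.symm (by positivity)
  constructor
  · rw [fromBlocks_mulVec]
    ext (i | i)
    · simp only [Sum.elim_inl, Sum.elim_comp_inl, Sum.elim_comp_inr, Pi.add_apply,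
        Pi.smul_apply, neg_mulVec, one_mulVec, Pi.neg_apply, hGγ]
      ring
    · have hvmv : (vecMulVec b b) *ᵥ γ = (b ⬝ᵥ γ) • b := by
        ext j
        simp [vecMulVec, mulVec, dotProduct, Finset.mul_sum, mul_assoc, Finset.sum_mul, mul_comm]
      simp only [Sum.elim_inr, Sum.elim_comp_inl, Sum.elim_comp_inr, Pi.add_apply,
        Pi.smul_apply, neg_mulVec, smul_mulVec, hvmv, hbγ, hGz, Pi.neg_apply,
        smul_eq_mul]
      have hs2 : (s:ℝ) ^ 2 ≠ 0 := by positivity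
      field_simp
      ring
  · intro h
    apply hz0
    ext i
    have := congrFun h (Sum.inr i)
    simpa using this
end

section
/- Let C and P be real symmetric m×m matrices with P positive definite, and let b ∈ ℝ^m with b ≠ 0. Let δ be the smallest generalized eigenvalue of the pencil (C, P), i.e., the smallest ζ ∈ ℝ for which C − ζP is singular, so that C − ζP is positive definite for all ζ < δ. Then the secular function f(ζ) = ((C − ζP)⁻¹b)ᵀ P ((C − ζP)⁻¹b) is strictly increasing on the interval (−∞, δ). -/
open Matrix

lemma dot_symm_aux {m : ℕ} (A : Matrix (Fin m) (Fin m) ℝ) (hA : Aᵀ = A)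
    (x y : Fin m → ℝ) : x ⬝ᵥ A *ᵥ y = y ⬝ᵥ A *ᵥ x := by
  conv_lhs => rw [Matrix.dotProduct_mulVec, ← hA, Matrix.vecMul_transpose]
  rw [dotProduct_comm]

/-- Strict monotonicity of the secular function
`f(ζ) = ((C − ζP)⁻¹b)ᵀ P ((C − ζP)⁻¹b)` on `(−∞, δ)`, where `δ` is the
smallest generalized eigenvalue of the pencil `(C, P)` (the smallest `ζ`
making `C − ζP` singular), so that `C − ζP` is positive definite for all
`ζ < δ`. -/
theorem stmt_13 (m : ℕ) (C P : Matrix (Fin m) (Fin m) ℝ)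
    (hC : C.IsSymm) (hP : P.PosDef)
    (b : Fin m → ℝ) (hb : b ≠ 0) (δ : ℝ)
    (hδ : IsLeast {ζ : ℝ | (C - ζ • P).det = 0} δ)
    (hpd : ∀ ζ : ℝ, ζ < δ → (C - ζ • P).PosDef) :
    StrictMonoOn
      (fun ζ : ℝ => ((C - ζ • P)⁻¹ *ᵥ b) ⬝ᵥ (P *ᵥ ((C - ζ • P)⁻¹ *ᵥ b)))
      (Set.Iio δ) := by
  intro ζ₁ h₁ ζ₂ h₂ h12
  simp only [Set.mem_Iio] at h₁ h₂
  set M₁ := C - ζ₁ • P with hM₁def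
  set M₂ := C - ζ₂ • P with hM₂def
  have hM₁ := hpd ζ₁ h₁
  have hM₂ := hpd ζ₂ h₂
  have hPu : IsUnit P := hP.isUnit
  have hM₁u : IsUnit M₁ := hM₁.isUnit
  have hM₂u : IsUnit M₂ := hM₂.isUnit
  haveI := hM₁u.invertible
  haveI := hM₂u.invertible
  haveI := hPu.invertible
  set α₁ := M₁⁻¹ *ᵥ b with hα₁def
  set α₂ := M₂⁻¹ *ᵥ b with hα₂def
  have hMα₁ : M₁ *ᵥ α₁ = b := by
    rw [hα₁def, mulVec_mulVec, Matrix.mul_inv_of_invertible, one_mulVec]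
  have hMα₂ : M₂ *ᵥ α₂ = b := by
    rw [hα₂def, mulVec_mulVec, Matrix.mul_inv_of_invertible, one_mulVec]
  have hα₁ne : α₁ ≠ 0 := by
    intro h
    apply hb
    rw [← hMα₁, h, mulVec_zero]
  set t := ζ₂ - ζ₁ with htdef
  have ht : 0 < t := sub_pos.mpr h12
  set v := P *ᵥ α₁ with hvdef
  have hvne : v ≠ 0 := by
    intro h
    exact hα₁ne (P.mulVec_injective_of_invertible (by rw [← hvdef, h, mulVec_zero]))
  set w := M₂⁻¹ *ᵥ v with hwdef
  have hwne : w ≠ 0 := by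
    intro h
    exact hvne ((M₂⁻¹).mulVec_injective_of_invertible (by rw [← hwdef, h, mulVec_zero]))
  -- key identity: α₂ = α₁ + t • w
  have hM₂eq : M₂ = M₁ - t • P := by
    rw [hM₁def, hM₂def, htdef]
    ext i j
    simp [Matrix.sub_apply, Matrix.smul_apply]
    ring
  have hMw : M₂ *ᵥ w = v := by
    rw [hwdef, mulVec_mulVec, Matrix.mul_inv_of_invertible, one_mulVec]
  have hkey : α₂ = α₁ + t • w := by
    apply M₂.mulVec_injective_of_invertible
    rw [hMα₂, mulVec_add, mulVec_smul, hMw]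
    nth_rewrite 1 [hM₂eq]
    rw [sub_mulVec, smul_mulVec, ← hvdef, hMα₁]
    abel
  have hPsymm : Pᵀ = P := hP.isHermitian.eq
  have hM₂isymm : (M₂⁻¹)ᵀ = M₂⁻¹ := hM₂.inv.isHermitian.eq
  -- positivity pieces
  have hvMv : 0 < v ⬝ᵥ w := by
    have := hM₂.inv.dotProduct_mulVec_pos hvne
    simpa [hwdef] using this
  have hwPw : 0 < w ⬝ᵥ P *ᵥ w := by
    have := hP.dotProduct_mulVec_pos hwne
    simpa using this
  have hsym1 : α₁ ⬝ᵥ P *ᵥ w = v ⬝ᵥ w := by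
    rw [dot_symm_aux P hPsymm α₁ w, dotProduct_comm, ← hvdef,
      dotProduct_comm]
  have hsym2 : w ⬝ᵥ P *ᵥ α₁ = v ⬝ᵥ w := by
    rw [← hvdef, dotProduct_comm]
  show α₁ ⬝ᵥ P *ᵥ α₁ < α₂ ⬝ᵥ P *ᵥ α₂
  rw [hkey]
  have expand : (α₁ + t • w) ⬝ᵥ P *ᵥ (α₁ + t • w)
      = α₁ ⬝ᵥ P *ᵥ α₁ + t * (α₁ ⬝ᵥ P *ᵥ w) + t * (w ⬝ᵥ P *ᵥ α₁)
        + t * t * (w ⬝ᵥ P *ᵥ w) := by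
    rw [mulVec_add, mulVec_smul]
    simp only [add_dotProduct, dotProduct_add, smul_dotProduct,
      dotProduct_smul, smul_eq_mul]
    ring
  rw [expand, hsym1, hsym2]
  nlinarith [mul_pos ht hvMv, mul_pos (mul_pos ht ht) hwPw]
end

section
/- Let C and P be real symmetric m×m matrices with P positive definite, b ∈ ℝ^m, and s > 0. Let δ be the smallest generalized eigenvalue of the pencil (C, P), and suppose there is a vector u ≠ 0 with Cu = δPu and uᵀb ≠ 0. Then there exists a unique ζ* < δ such that α* := (C − ζ*P)⁻¹b satisfies (α*)ᵀPα* = s², and this α* is a global minimizer of αᵀCα − 2bᵀα over {α ∈ ℝ^m : αᵀPα = s²}. -/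
open Matrix

namespace LSKPCA

variable {m : ℕ}

lemma symm_dot (A : Matrix (Fin m) (Fin m) ℝ) (hA : A.IsSymm) (x y : Fin m → ℝ) :
    x ⬝ᵥ (A *ᵥ y) = (A *ᵥ x) ⬝ᵥ y := by
  rw [Matrix.dotProduct_mulVec, ← Matrix.mulVec_transpose, hA]

lemma isSymm_of_posDef {A : Matrix (Fin m) (Fin m) ℝ} (hA : A.PosDef) : A.IsSymm := by
  have := hA.isHermitian
  rwa [Matrix.IsHermitian, Matrix.conjTranspose_eq_transpose_of_trivial] at this

lemma posdef_quad {A : Matrix (Fin m) (Fin m) ℝ} (hA : A.PosDef) {x : Fin m → ℝ} (hx : x ≠ 0) :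
    0 < x ⬝ᵥ (A *ᵥ x) := by
  simpa using hA.dotProduct_mulVec_pos hx

lemma posdef_quad_nonneg {A : Matrix (Fin m) (Fin m) ℝ} (hA : A.PosDef) (x : Fin m → ℝ) :
    0 ≤ x ⬝ᵥ (A *ᵥ x) := by
  rcases eq_or_ne x 0 with rfl | hx
  · simp
  · exact (posdef_quad hA hx).le

/-- Cauchy–Schwarz for the inner product defined by a positive definite matrix. -/
lemma pcs {P : Matrix (Fin m) (Fin m) ℝ} (hP : P.PosDef) (x y : Fin m → ℝ) :
    (x ⬝ᵥ (P *ᵥ y)) ^ 2 ≤ (x ⬝ᵥ (P *ᵥ x)) * (y ⬝ᵥ (P *ᵥ y)) := by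
  rcases eq_or_ne y 0 with rfl | hy
  · simp
  · have hPs := isSymm_of_posDef hP
    have ha : 0 < y ⬝ᵥ (P *ᵥ y) := posdef_quad hP hy
    set a := y ⬝ᵥ (P *ᵥ y) with hadef
    set c := x ⬝ᵥ (P *ᵥ y) with hcdef
    have hyx : y ⬝ᵥ (P *ᵥ x) = c := by
      rw [symm_dot P hPs, dotProduct_comm]
    have key : 0 ≤ (a • x - c • y) ⬝ᵥ (P *ᵥ (a • x - c • y)) :=
      posdef_quad_nonneg hP _
    rw [Matrix.mulVec_sub] at key
    simp only [Matrix.mulVec_smul, dotProduct_sub, sub_dotProduct, dotProduct_smul,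
      smul_dotProduct, smul_eq_mul, ← hcdef, hyx, ← hadef] at key
    nlinarith [key, ha]

/-- A symmetric PSD quadratic form vanishing at `x` forces `A *ᵥ x = 0`. -/
lemma psd_kernel {A : Matrix (Fin m) (Fin m) ℝ} (hA : A.IsSymm)
    (hpsd : ∀ z : Fin m → ℝ, 0 ≤ z ⬝ᵥ (A *ᵥ z)) {x : Fin m → ℝ}
    (hx : x ⬝ᵥ (A *ᵥ x) = 0) : A *ᵥ x = 0 := by
  have key : ∀ y : Fin m → ℝ, y ⬝ᵥ (A *ᵥ x) = 0 := by
    intro y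
    set q := y ⬝ᵥ (A *ᵥ y) with hq
    set c := y ⬝ᵥ (A *ᵥ x) with hc
    have hq0 : 0 ≤ q := hpsd y
    have hxy : x ⬝ᵥ (A *ᵥ y) = c := by rw [symm_dot A hA, dotProduct_comm]
    have h := hpsd (x + (-c / (q + 1)) • y)
    rw [Matrix.mulVec_add] at h
    simp only [Matrix.mulVec_smul, dotProduct_add, add_dotProduct, dotProduct_smul,
      smul_dotProduct, smul_eq_mul, hx, hxy, ← hq, ← hc] at h
    have hq1 : (0:ℝ) < q + 1 := by linarith
    set t := -c / (q + 1) with htdef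
    have ht : t * (q + 1) = -c := by
      rw [htdef]; field_simp
    have hcval : c = -(t * (q + 1)) := by linarith
    have htc : t * c = -(t ^ 2 * (q + 1)) := by rw [hcval]; ring
    have h3 : t ^ 2 * (q + 2) ≤ 0 := by nlinarith [h, htc]
    have ht2 : t ^ 2 = 0 := le_antisymm (by nlinarith [hq0]) (sq_nonneg t)
    have ht0 : t = 0 := by
      have := sq_eq_zero_iff.mp ht2
      simpa using this
    have : -c = 0 := by rw [← ht, ht0]; ring
    linarith
  funext i
  have := key (Pi.single i 1)
  simpa [dotProduct, Pi.single_apply] using this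


lemma quad_cont (A : Matrix (Fin m) (Fin m) ℝ) :
    Continuous (fun x : Fin m → ℝ => x ⬝ᵥ (A *ᵥ x)) :=
  continuous_id.dotProduct (continuous_const.matrix_mulVec continuous_id)

/-- The key spectral fact: `δ`, a lower bound for the generalized spectrum that is
itself a generalized eigenvalue, bounds the Rayleigh quotient from below. -/
lemma rayleigh (C P : Matrix (Fin m) (Fin m) ℝ) (hC : C.IsSymm) (hP : P.PosDef)
    (δ : ℝ) (hδ : IsLeast {ζ : ℝ | (C - ζ • P).det = 0} δ) (hm : 0 < m) :
    ∀ x : Fin m → ℝ, δ * (x ⬝ᵥ (P *ᵥ x)) ≤ x ⬝ᵥ (C *ᵥ x) := by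
  classical
  set S : Set (Fin m → ℝ) := {x | x ⬝ᵥ x = 1} with hSdef
  have hS_closed : IsClosed S :=
    isClosed_eq (continuous_id.dotProduct continuous_id) continuous_const
  have hS_bdd : Bornology.IsBounded S := by
    refine (Metric.isBounded_closedBall (x := (0 : Fin m → ℝ)) (r := 1)).subset ?_
    intro x hx
    simp only [Metric.mem_closedBall, dist_zero_right]
    rw [pi_norm_le_iff_of_nonneg zero_le_one]
    intro i
    have h1 : x i * x i ≤ 1 := by
      have hsum : ∑ j, x j * x j = 1 := hx
      have h' : x i * x i ≤ ∑ j, x j * x j :=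
        Finset.single_le_sum (fun j _ => mul_self_nonneg (x j)) (Finset.mem_univ i)
      linarith
    rw [Real.norm_eq_abs, abs_le]
    constructor <;> nlinarith
  have hS_comp : IsCompact S := Metric.isCompact_of_isClosed_isBounded hS_closed hS_bdd
  have hS_ne : S.Nonempty := by
    refine ⟨Pi.single ⟨0, hm⟩ 1, ?_⟩
    simp [hSdef, dotProduct, Pi.single_apply]
  have hmemne : ∀ x ∈ S, x ≠ 0 := by
    intro x hx h0
    rw [h0] at hx
    simp [hSdef] at hx
  have hρcont : ContinuousOn
      (fun x : Fin m → ℝ => (x ⬝ᵥ (C *ᵥ x)) / (x ⬝ᵥ (P *ᵥ x))) S :=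
    ((quad_cont C).continuousOn).div ((quad_cont P).continuousOn)
      (fun x hx => (posdef_quad hP (hmemne x hx)).ne')
  obtain ⟨x₀, hx₀S, hmin⟩ := hS_comp.exists_isMinOn hS_ne hρcont
  set r : ℝ := (x₀ ⬝ᵥ (C *ᵥ x₀)) / (x₀ ⬝ᵥ (P *ᵥ x₀)) with hrdef
  have hx₀ne : x₀ ≠ 0 := hmemne x₀ hx₀S
  have hPx₀ : 0 < x₀ ⬝ᵥ (P *ᵥ x₀) := posdef_quad hP hx₀ne
  -- the quadratic form of C - r•P
  have hform : ∀ x : Fin m → ℝ, x ⬝ᵥ ((C - r • P) *ᵥ x)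
      = x ⬝ᵥ (C *ᵥ x) - r * (x ⬝ᵥ (P *ᵥ x)) := by
    intro x
    simp [Matrix.sub_mulVec, Matrix.smul_mulVec, dotProduct_sub, dotProduct_smul,
      smul_eq_mul]
  have hray : ∀ x : Fin m → ℝ, x ≠ 0 → r * (x ⬝ᵥ (P *ᵥ x)) ≤ x ⬝ᵥ (C *ᵥ x) := by
    intro x hx
    have hxx : 0 < x ⬝ᵥ x := by
      have hge : 0 ≤ x ⬝ᵥ x := Finset.sum_nonneg (fun j _ => mul_self_nonneg (x j))
      have hne : x ⬝ᵥ x ≠ 0 := fun h => hx (dotProduct_self_eq_zero.mp h)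
      exact lt_of_le_of_ne hge (Ne.symm hne)
    set cc : ℝ := (Real.sqrt (x ⬝ᵥ x))⁻¹ with hccdef
    have hsq : Real.sqrt (x ⬝ᵥ x) > 0 := Real.sqrt_pos.mpr hxx
    have hcc : 0 < cc := by positivity
    have hccsq : cc ^ 2 = (x ⬝ᵥ x)⁻¹ := by
      rw [hccdef, inv_pow, Real.sq_sqrt hxx.le]
    have hc2 : cc ^ 2 * (x ⬝ᵥ x) = 1 := by
      rw [hccsq]
      exact inv_mul_cancel₀ hxx.ne'
    have hyS : cc • x ∈ S := by
      simp only [hSdef, Set.mem_setOf_eq, smul_dotProduct, dotProduct_smul, smul_eq_mul]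
      nlinarith [hc2]
    have hPscale : (cc • x) ⬝ᵥ (P *ᵥ (cc • x)) = cc ^ 2 * (x ⬝ᵥ (P *ᵥ x)) := by
      simp only [Matrix.mulVec_smul, smul_dotProduct, dotProduct_smul, smul_eq_mul]; ring
    have hCscale : (cc • x) ⬝ᵥ (C *ᵥ (cc • x)) = cc ^ 2 * (x ⬝ᵥ (C *ᵥ x)) := by
      simp only [Matrix.mulVec_smul, smul_dotProduct, dotProduct_smul, smul_eq_mul]; ring
    have hPy : 0 < (cc • x) ⬝ᵥ (P *ᵥ (cc • x)) := posdef_quad hP (hmemne _ hyS)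
    have hrle := hmin hyS
    simp only [Set.mem_setOf_eq] at hrle
    rw [← hrdef] at hrle
    rw [le_div_iff₀ hPy] at hrle
    rw [hPscale, hCscale] at hrle
    nlinarith [hrle, hcc, sq_nonneg cc, hc2]
  -- C - r•P is PSD
  have hpsd : ∀ z : Fin m → ℝ, 0 ≤ z ⬝ᵥ ((C - r • P) *ᵥ z) := by
    intro z
    rcases eq_or_ne z 0 with rfl | hz
    · simp
    · rw [hform]; linarith [hray z hz]
  have hsymm : (C - r • P).IsSymm := by
    rw [Matrix.IsSymm, Matrix.transpose_sub, Matrix.transpose_smul, hC,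
      isSymm_of_posDef hP]
  have hx₀zero : x₀ ⬝ᵥ ((C - r • P) *ᵥ x₀) = 0 := by
    rw [hform, hrdef]
    field_simp
    ring
  have hker : (C - r • P) *ᵥ x₀ = 0 := psd_kernel hsymm hpsd hx₀zero
  have hdet : (C - r • P).det = 0 := by
    rw [← Matrix.exists_mulVec_eq_zero_iff]
    exact ⟨x₀, hx₀ne, hker⟩
  have hδr : δ ≤ r := hδ.2 hdet
  intro x
  rcases eq_or_ne x 0 with rfl | hx
  · simp
  · have h1 := hray x hx
    have h2 : 0 < x ⬝ᵥ (P *ᵥ x) := posdef_quad hP hx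
    nlinarith [h1, h2, hδr]


lemma pencil_symm {C P : Matrix (Fin m) (Fin m) ℝ} (hC : C.IsSymm) (hPs : P.IsSymm)
    (ζ : ℝ) : (C - ζ • P).IsSymm :=
  hC.sub (hPs.smul ζ)

lemma pencil_posdef (C P : Matrix (Fin m) (Fin m) ℝ) (hC : C.IsSymm) (hP : P.PosDef)
    (δ : ℝ) (hδ : IsLeast {ζ : ℝ | (C - ζ • P).det = 0} δ) (hm : 0 < m)
    {ζ : ℝ} (hζ : ζ < δ) : (C - ζ • P).PosDef := by
  have hray := rayleigh C P hC hP δ hδ hm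
  refine Matrix.PosDef.of_dotProduct_mulVec_pos ?_ ?_
  · rw [Matrix.IsHermitian, Matrix.conjTranspose_eq_transpose_of_trivial]
    exact pencil_symm hC (isSymm_of_posDef hP) ζ
  · intro x hx
    have hst : star x = x := by funext i; simp
    rw [hst]
    have hPx := posdef_quad hP hx
    have h := hray x
    have hform : x ⬝ᵥ ((C - ζ • P) *ᵥ x) = x ⬝ᵥ (C *ᵥ x) - ζ * (x ⬝ᵥ (P *ᵥ x)) := by
      simp [Matrix.sub_mulVec, Matrix.smul_mulVec, dotProduct_sub, dotProduct_smul,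
        smul_eq_mul]
    rw [hform]
    nlinarith [h, hPx]

end LSKPCA

set_option maxHeartbeats 2000000 in
open LSKPCA in
/-- Exact solvability of LS-KPCA: there is a unique `ζstar < δ` (with `δ` the
smallest generalized eigenvalue of the pencil `(C, P)`) solving the secular
equation `((C − ζP)⁻¹b)ᵀP((C − ζP)⁻¹b) = s²`, and `αstar = (C − ζstar P)⁻¹b`
is a global minimizer of `αᵀCα − 2bᵀα` over `{α : αᵀPα = s²}`. -/
theorem stmt_14 (m : ℕ) (C P : Matrix (Fin m) (Fin m) ℝ)
    (hC : C.IsSymm) (hP : P.PosDef)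
    (b : Fin m → ℝ) (s : ℝ) (hs : 0 < s) (δ : ℝ)
    (hδ : IsLeast {ζ : ℝ | (C - ζ • P).det = 0} δ)
    (u : Fin m → ℝ) (hu : u ≠ 0) (hCu : C *ᵥ u = δ • (P *ᵥ u)) (hub : u ⬝ᵥ b ≠ 0) :
    ∃ ζstar : ℝ, ζstar < δ ∧
      ((C - ζstar • P)⁻¹ *ᵥ b) ⬝ᵥ (P *ᵥ ((C - ζstar • P)⁻¹ *ᵥ b)) = s ^ 2 ∧
      (∀ ζ : ℝ, ζ < δ →
        ((C - ζ • P)⁻¹ *ᵥ b) ⬝ᵥ (P *ᵥ ((C - ζ • P)⁻¹ *ᵥ b)) = s ^ 2 → ζ = ζstar) ∧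
      ∀ α : Fin m → ℝ, α ⬝ᵥ (P *ᵥ α) = s ^ 2 →
        ((C - ζstar • P)⁻¹ *ᵥ b) ⬝ᵥ (C *ᵥ ((C - ζstar • P)⁻¹ *ᵥ b)) -
            2 * (b ⬝ᵥ ((C - ζstar • P)⁻¹ *ᵥ b)) ≤
          α ⬝ᵥ (C *ᵥ α) - 2 * (b ⬝ᵥ α) := by

  classical
  -- m is positive since u ≠ 0
  have hm : 0 < m := by
    rcases Nat.eq_zero_or_pos m with h0 | h
    · exfalso; apply hu; funext i; exact absurd i.2 (by omega)
    · exact h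
  have hPs : P.IsSymm := isSymm_of_posDef hP
  set A : ℝ → Matrix (Fin m) (Fin m) ℝ := fun ζ => C - ζ • P with hA
  have hposd : ∀ ζ : ℝ, ζ < δ → (A ζ).PosDef := fun ζ h =>
    pencil_posdef C P hC hP δ hδ hm h
  have hdet : ∀ ζ : ℝ, ζ < δ → (A ζ).det ≠ 0 := by
    intro ζ h hd
    exact absurd (hδ.2 hd) (not_le.2 h)
  set α : ℝ → (Fin m → ℝ) := fun ζ => (A ζ)⁻¹ *ᵥ b with hα
  have hsolve : ∀ ζ : ℝ, ζ < δ → A ζ *ᵥ α ζ = b := by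
    intro ζ h
    show A ζ *ᵥ ((A ζ)⁻¹ *ᵥ b) = b
    rw [Matrix.mulVec_mulVec, Matrix.mul_nonsing_inv _ (hdet ζ h).isUnit,
      Matrix.one_mulVec]
  have hAsymm : ∀ ζ : ℝ, (A ζ).IsSymm := fun ζ => pencil_symm hC hPs ζ
  have hb0 : b ≠ 0 := fun h => hub (by simp [h])
  have hαne : ∀ ζ : ℝ, ζ < δ → α ζ ≠ 0 := by
    intro ζ h h0
    apply hb0
    rw [← hsolve ζ h, h0, Matrix.mulVec_zero]
  set g : ℝ → ℝ := fun ζ => α ζ ⬝ᵥ (P *ᵥ α ζ) with hg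
  have hg0 : ∀ ζ : ℝ, 0 ≤ g ζ := fun ζ => posdef_quad_nonneg hP _
  have hexpand : ∀ ζ : ℝ, ∀ z : Fin m → ℝ,
      z ⬝ᵥ (A ζ *ᵥ z) = z ⬝ᵥ (C *ᵥ z) - ζ * (z ⬝ᵥ (P *ᵥ z)) := by
    intro ζ z
    show z ⬝ᵥ ((C - ζ • P) *ᵥ z) = _
    simp [Matrix.sub_mulVec, Matrix.smul_mulVec, dotProduct_sub, dotProduct_smul,
      smul_eq_mul]
  -- strict monotonicity of g on (-∞, δ)
  have hmono : ∀ ζ₁ ζ₂ : ℝ, ζ₁ < ζ₂ → ζ₂ < δ → g ζ₁ < g ζ₂ := by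
    intro ζ₁ ζ₂ h12 h2δ
    have h1δ : ζ₁ < δ := h12.trans h2δ
    have ht : 0 < ζ₂ - ζ₁ := by linarith
    have hKpd : ((A ζ₂)⁻¹).PosDef := (hposd ζ₂ h2δ).inv
    have hKs : ((A ζ₂)⁻¹).IsSymm := isSymm_of_posDef hKpd
    have hwne : P *ᵥ α ζ₁ ≠ 0 := by
      intro h0
      have hq := posdef_quad hP (hαne ζ₁ h1δ)
      rw [h0] at hq
      simp at hq
    have hid : α ζ₂ = α ζ₁ + (ζ₂ - ζ₁) • ((A ζ₂)⁻¹ *ᵥ (P *ᵥ α ζ₁)) := by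
      have e2 : A ζ₂ *ᵥ ((A ζ₂)⁻¹ *ᵥ (P *ᵥ α ζ₁)) = P *ᵥ α ζ₁ := by
        rw [Matrix.mulVec_mulVec, Matrix.mul_nonsing_inv _ (hdet ζ₂ h2δ).isUnit,
          Matrix.one_mulVec]
      have e3 : A ζ₂ *ᵥ α ζ₁ = b - (ζ₂ - ζ₁) • (P *ᵥ α ζ₁) := by
        have hAA : A ζ₂ = A ζ₁ - (ζ₂ - ζ₁) • P := by
          show C - ζ₂ • P = (C - ζ₁ • P) - (ζ₂ - ζ₁) • P
          rw [sub_smul]; abel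
        rw [hAA, Matrix.sub_mulVec, hsolve ζ₁ h1δ, Matrix.smul_mulVec]
      have e1 : A ζ₂ *ᵥ (α ζ₁ + (ζ₂ - ζ₁) • ((A ζ₂)⁻¹ *ᵥ (P *ᵥ α ζ₁))) = b := by
        rw [Matrix.mulVec_add, Matrix.mulVec_smul, e2, e3]
        abel
      have := congrArg (fun v => (A ζ₂)⁻¹ *ᵥ v) e1
      rw [Matrix.mulVec_mulVec, Matrix.nonsing_inv_mul _ (hdet ζ₂ h2δ).isUnit,
        Matrix.one_mulVec] at this
      show (A ζ₂)⁻¹ *ᵥ b = _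
      rw [this]
    have hcross : α ζ₁ ⬝ᵥ (P *ᵥ ((A ζ₂)⁻¹ *ᵥ (P *ᵥ α ζ₁)))
        = (P *ᵥ α ζ₁) ⬝ᵥ ((A ζ₂)⁻¹ *ᵥ (P *ᵥ α ζ₁)) := by
      rw [symm_dot P hPs]
    have hcross2 : ((A ζ₂)⁻¹ *ᵥ (P *ᵥ α ζ₁)) ⬝ᵥ (P *ᵥ α ζ₁)
        = (P *ᵥ α ζ₁) ⬝ᵥ ((A ζ₂)⁻¹ *ᵥ (P *ᵥ α ζ₁)) := by
      rw [dotProduct_comm]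
    have hKw : 0 < (P *ᵥ α ζ₁) ⬝ᵥ ((A ζ₂)⁻¹ *ᵥ (P *ᵥ α ζ₁)) := posdef_quad hKpd hwne
    have hquad : 0 ≤ ((A ζ₂)⁻¹ *ᵥ (P *ᵥ α ζ₁)) ⬝ᵥ
        (P *ᵥ ((A ζ₂)⁻¹ *ᵥ (P *ᵥ α ζ₁))) := posdef_quad_nonneg hP _
    have hrw : g ζ₂ = α ζ₂ ⬝ᵥ (P *ᵥ α ζ₂) := rfl
    have hrw1 : g ζ₁ = α ζ₁ ⬝ᵥ (P *ᵥ α ζ₁) := rfl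
    rw [hrw, hrw1, hid]
    have hc2' : ((A ζ₂)⁻¹ *ᵥ (P *ᵥ α ζ₁)) ⬝ᵥ (P *ᵥ α ζ₁)
        = (P *ᵥ α ζ₁) ⬝ᵥ ((A ζ₂)⁻¹ *ᵥ (P *ᵥ α ζ₁)) := hcross2
    simp only [Matrix.mulVec_add, Matrix.mulVec_smul, dotProduct_add, add_dotProduct,
      dotProduct_smul, smul_dotProduct, smul_eq_mul]
    nlinarith [mul_pos ht hKw, mul_nonneg (mul_nonneg ht.le ht.le) hquad, hcross, hc2']
  -- continuity of g on (-∞, δ)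
  have hgcont : ContinuousOn g (Set.Iio δ) := by
    intro ζ₀ hζ₀
    apply ContinuousAt.continuousWithinAt
    have hAc : Continuous A := continuous_const.sub (continuous_id.smul continuous_const)
    have hinv : ContinuousAt Inv.inv (A ζ₀) := by
      apply continuousAt_matrix_inv
      rw [Ring.inverse_eq_inv']
      exact continuousAt_inv₀ (hdet ζ₀ hζ₀)
    have h1 : ContinuousAt (fun ζ => (A ζ)⁻¹) ζ₀ := hinv.comp hAc.continuousAt
    have h2 : Continuous (fun M : Matrix (Fin m) (Fin m) ℝ => M *ᵥ b) :=
      continuous_id.matrix_mulVec continuous_const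
    have hαc : ContinuousAt α ζ₀ := h2.continuousAt.comp h1
    exact ((quad_cont P).continuousAt).comp hαc
  -- a point where g < s²
  have hPinv : P⁻¹.PosDef := hP.inv
  have hcP0 : 0 ≤ b ⬝ᵥ (P⁻¹ *ᵥ b) := posdef_quad_nonneg hPinv b
  set cP := b ⬝ᵥ (P⁻¹ *ᵥ b) with hcP
  have hbound : ∀ ζ : ℝ, ζ < δ → (δ - ζ) ^ 2 * (g ζ * g ζ) ≤ g ζ * cP := by
    intro ζ hζ
    have hαb : α ζ ⬝ᵥ b = α ζ ⬝ᵥ (C *ᵥ α ζ) - ζ * (α ζ ⬝ᵥ (P *ᵥ α ζ)) := by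
      conv_lhs => rw [← hsolve ζ hζ, symm_dot (A ζ) (hAsymm ζ), dotProduct_comm]
      exact hexpand ζ (α ζ)
    have hray := rayleigh C P hC hP δ hδ hm (α ζ)
    have hgge : 0 ≤ g ζ := hg0 ζ
    have hgζrw : g ζ = α ζ ⬝ᵥ (P *ᵥ α ζ) := rfl
    have hlow : (δ - ζ) * g ζ ≤ α ζ ⬝ᵥ b := by
      rw [hαb, hgζrw]; nlinarith [hray]
    have hPPb : P *ᵥ (P⁻¹ *ᵥ b) = b := by
      rw [Matrix.mulVec_mulVec, Matrix.mul_nonsing_inv _ hP.det_pos.ne'.isUnit,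
        Matrix.one_mulVec]
    have hcs := pcs hP (α ζ) (P⁻¹ *ᵥ b)
    rw [hPPb] at hcs
    have hc2 : (P⁻¹ *ᵥ b) ⬝ᵥ b = cP := by rw [dotProduct_comm, hcP]
    rw [hc2, ← hgζrw] at hcs
    have hδζ : 0 < δ - ζ := sub_pos.mpr hζ
    have h1 : 0 ≤ α ζ ⬝ᵥ b - (δ - ζ) * g ζ := by linarith
    have h2 : 0 ≤ α ζ ⬝ᵥ b + (δ - ζ) * g ζ := by nlinarith [mul_nonneg hδζ.le hgge]
    nlinarith [hcs, mul_nonneg h1 h2]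
  have hex_lo : ∃ ζ₁ : ℝ, ζ₁ < δ ∧ g ζ₁ < s ^ 2 := by
    set T : ℝ := 1 + Real.sqrt cP / s with hT
    have hsq : 0 ≤ Real.sqrt cP := Real.sqrt_nonneg _
    have hT1 : 1 ≤ T := by
      have : 0 ≤ Real.sqrt cP / s := by positivity
      rw [hT]; linarith
    have hT0 : 0 < T := by linarith
    have hsqcP : Real.sqrt cP ^ 2 = cP := Real.sq_sqrt hcP0
    have hsT : s * T = s + Real.sqrt cP := by
      rw [hT]; field_simp
    have hsT2 : (s * T) ^ 2 = (s + Real.sqrt cP) ^ 2 := by rw [hsT]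
    have hT2 : cP < s ^ 2 * T ^ 2 := by
      nlinarith [hsT2, hsqcP, hs, hsq, mul_pos hs hs, mul_nonneg hs.le hsq]
    refine ⟨δ - T, by linarith, ?_⟩
    have hb := hbound (δ - T) (by linarith)
    have hdd : δ - (δ - T) = T := by ring
    rw [hdd] at hb
    rcases eq_or_lt_of_le (hg0 (δ - T)) with h0 | hpos
    · rw [← h0]; positivity
    · have h3 : g (δ - T) * cP < g (δ - T) * (s ^ 2 * T ^ 2) :=
        mul_lt_mul_of_pos_left hT2 hpos
      by_contra hcon
      push_neg at hcon
      have h4 : (0:ℝ) < T ^ 2 * g (δ - T) := by positivity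
      nlinarith [hb, h3, mul_le_mul_of_nonneg_left hcon h4.le]
  -- a point where g > s²
  have hpu0 : 0 < u ⬝ᵥ (P *ᵥ u) := posdef_quad hP hu
  set pu := u ⬝ᵥ (P *ᵥ u) with hpu
  have hβ0 : 0 < (u ⬝ᵥ b) ^ 2 := by positivity
  set β := (u ⬝ᵥ b) ^ 2 with hβ
  have hbig : ∀ ζ : ℝ, ζ < δ → β ≤ (δ - ζ) ^ 2 * (pu * g ζ) := by
    intro ζ hζ
    have h2 : A ζ *ᵥ u = (δ - ζ) • (P *ᵥ u) := by
      show (C - ζ • P) *ᵥ u = _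
      rw [Matrix.sub_mulVec, hCu, Matrix.smul_mulVec, ← sub_smul]
    have h1 : u ⬝ᵥ b = (δ - ζ) * (u ⬝ᵥ (P *ᵥ α ζ)) := by
      conv_lhs => rw [← hsolve ζ hζ, symm_dot (A ζ) (hAsymm ζ)]
      rw [h2, smul_dotProduct, smul_eq_mul, ← symm_dot P hPs]
    have hcs := pcs hP u (α ζ)
    have hgζrw : g ζ = α ζ ⬝ᵥ (P *ᵥ α ζ) := rfl
    rw [← hpu, ← hgζrw] at hcs
    calc β = (δ - ζ) ^ 2 * (u ⬝ᵥ (P *ᵥ α ζ)) ^ 2 := by rw [hβ, h1]; ring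
    _ ≤ (δ - ζ) ^ 2 * (pu * g ζ) := by
        exact mul_le_mul_of_nonneg_left hcs (sq_nonneg _)
  have hex_hi : ∃ ζ₂ : ℝ, ζ₂ < δ ∧ s ^ 2 < g ζ₂ := by
    have hden : (0:ℝ) < pu * s ^ 2 := by positivity
    set ε : ℝ := Real.sqrt (β / (pu * s ^ 2)) / 2 with hε
    have hεpos : 0 < ε := by
      rw [hε]
      have : 0 < β / (pu * s ^ 2) := by positivity
      positivity
    have hε2 : ε ^ 2 = β / (pu * s ^ 2) / 4 := by
      rw [hε, div_pow, Real.sq_sqrt (by positivity)]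
      norm_num
    refine ⟨δ - ε, by linarith, ?_⟩
    have hb := hbig (δ - ε) (by linarith)
    have hdd : δ - (δ - ε) = ε := by ring
    rw [hdd, hε2] at hb
    by_contra hcon
    push_neg at hcon
    have hgle : pu * g (δ - ε) ≤ pu * s ^ 2 := mul_le_mul_of_nonneg_left hcon hpu0.le
    have hfac : (0:ℝ) ≤ β / (pu * s ^ 2) / 4 := by positivity
    have hb2 : β ≤ β / (pu * s ^ 2) / 4 * (pu * s ^ 2) :=
      le_trans hb (mul_le_mul_of_nonneg_left hgle hfac)
    have heq : β / (pu * s ^ 2) / 4 * (pu * s ^ 2) = β / 4 := by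
      field_simp
    rw [heq] at hb2
    linarith
  obtain ⟨ζ₁, hζ₁δ, hgζ₁⟩ := hex_lo
  obtain ⟨ζ₂, hζ₂δ, hgζ₂⟩ := hex_hi
  have h12 : ζ₁ < ζ₂ := by
    by_contra hcon
    push_neg at hcon
    rcases eq_or_lt_of_le hcon with heq | hlt
    · rw [heq] at hgζ₂; linarith
    · have := hmono ζ₂ ζ₁ hlt hζ₁δ; linarith
  have hIcc : Set.Icc ζ₁ ζ₂ ⊆ Set.Iio δ := fun x hx => lt_of_le_of_lt hx.2 hζ₂δ
  have hivt := intermediate_value_Icc h12.le (hgcont.mono hIcc)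
  have hmem : s ^ 2 ∈ Set.Icc (g ζ₁) (g ζ₂) := ⟨hgζ₁.le, hgζ₂.le⟩
  obtain ⟨ζst, hζstI, hgst⟩ := hivt hmem
  have hζstδ : ζst < δ := lt_of_le_of_lt hζstI.2 hζ₂δ
  refine ⟨ζst, hζstδ, hgst, ?_, ?_⟩
  · -- uniqueness
    intro ζ hζ hgζ
    have hgζ' : g ζ = s ^ 2 := hgζ
    rcases lt_trichotomy ζ ζst with h | h | h
    · have := hmono ζ ζst h hζstδ
      rw [hgζ', hgst] at this
      exact absurd this (lt_irrefl _)
    · exact h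
    · have := hmono ζst ζ h hζ
      rw [hgζ', hgst] at this
      exact absurd this (lt_irrefl _)
  · -- optimality
    intro y hy
    have hx : α ζst ⬝ᵥ (P *ᵥ α ζst) = s ^ 2 := hgst
    have hsol : A ζst *ᵥ α ζst = b := hsolve ζst hζstδ
    have hq : 0 ≤ (y - α ζst) ⬝ᵥ (A ζst *ᵥ (y - α ζst)) :=
      posdef_quad_nonneg (hposd ζst hζstδ) _
    rw [Matrix.mulVec_sub] at hq
    simp only [dotProduct_sub, sub_dotProduct] at hq
    have e1 : y ⬝ᵥ (A ζst *ᵥ α ζst) = y ⬝ᵥ b := by rw [hsol]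
    have e2 : α ζst ⬝ᵥ (A ζst *ᵥ y) = y ⬝ᵥ b := by
      rw [symm_dot _ (hAsymm _), hsol, dotProduct_comm]
    have e3 : α ζst ⬝ᵥ (A ζst *ᵥ α ζst) = α ζst ⬝ᵥ b := by rw [hsol]
    have e4 := hexpand ζst y
    have e5 := hexpand ζst (α ζst)
    rw [hy] at e4
    rw [e1, e2, e3, e4] at hq
    rw [hx] at e5
    rw [e3] at e5
    show α ζst ⬝ᵥ (C *ᵥ α ζst) - 2 * (b ⬝ᵥ α ζst) ≤ y ⬝ᵥ (C *ᵥ y) - 2 * (b ⬝ᵥ y)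
    have hby : b ⬝ᵥ y = y ⬝ᵥ b := dotProduct_comm _ _
    have hbx : b ⬝ᵥ α ζst = α ζst ⬝ᵥ b := dotProduct_comm _ _
    rw [hby, hbx]
    linarith [hq, e5]
end

section
/- Let G be a real symmetric m×m matrix with smallest eigenvalue δ, and let u be a unit eigenvector of G with eigenvalue δ. Let b ∈ ℝ^m and s > 0. If ζ < δ and ‖(G − ζI)⁻¹b‖₂ = s, then ζ ≤ δ − |uᵀb|/s. -/
open Matrix

/-- Localization of the root of the secular equation: if `δ` is the smallest
eigenvalue of the symmetric matrix `G` with unit eigenvector `u`, `ζ < δ` and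
`‖(G − ζI)⁻¹b‖₂ = s`, then `ζ ≤ δ − |uᵀb|/s`. -/
theorem stmt_15 (m : ℕ) (G : Matrix (Fin m) (Fin m) ℝ) (hG : G.IsSymm)
    (δ : ℝ) (u : Fin m → ℝ)
    (hunit : Real.sqrt (∑ i, (u i) ^ 2) = 1)
    (hGu : G *ᵥ u = δ • u)
    (hmin : ∀ (μ : ℝ) (x : Fin m → ℝ), x ≠ 0 → G *ᵥ x = μ • x → δ ≤ μ)
    (b : Fin m → ℝ) (s : ℝ) (hs : 0 < s) (ζ : ℝ) (hζ : ζ < δ)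
    (hroot :
      Real.sqrt (∑ i, (((G - ζ • (1 : Matrix (Fin m) (Fin m) ℝ))⁻¹ *ᵥ b) i) ^ 2) = s) :
    ζ ≤ δ - |u ⬝ᵥ b| / s := by
  set A : Matrix (Fin m) (Fin m) ℝ := G - ζ • (1 : Matrix (Fin m) (Fin m) ℝ) with hA
  set z : Fin m → ℝ := A⁻¹ *ᵥ b with hz
  -- A is invertible
  have hdet : A.det ≠ 0 := by
    intro h0
    obtain ⟨v, hv, hAv⟩ := (Matrix.exists_mulVec_eq_zero_iff).2 h0
    have hGv : G *ᵥ v = ζ • v := by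
      have := hAv
      rw [hA, Matrix.sub_mulVec, Matrix.smul_mulVec, Matrix.one_mulVec,
        sub_eq_zero] at this
      exact this
    exact absurd (hmin ζ v hv hGv) (not_le.2 hζ)
  have hIsUnit : IsUnit A.det := isUnit_iff_ne_zero.2 hdet
  have hb : A *ᵥ z = b := by
    rw [hz, Matrix.mulVec_mulVec, Matrix.mul_nonsing_inv _ hIsUnit, Matrix.one_mulVec]
  -- A is symmetric
  have hAsymm : Aᵀ = A := by
    rw [hA, Matrix.transpose_sub, hG.eq, Matrix.transpose_smul, Matrix.transpose_one]
  -- A *ᵥ u = (δ - ζ) • u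
  have hAu : A *ᵥ u = (δ - ζ) • u := by
    rw [hA, Matrix.sub_mulVec, Matrix.smul_mulVec, Matrix.one_mulVec, hGu,
      sub_smul]
  -- u ⬝ᵥ b = (δ - ζ) * (u ⬝ᵥ z)
  have hub : u ⬝ᵥ b = (δ - ζ) * (u ⬝ᵥ z) := by
    rw [← hb, Matrix.dotProduct_mulVec, ← Matrix.mulVec_transpose, hAsymm, hAu,
      smul_dotProduct, smul_eq_mul]
  -- Cauchy-Schwarz: |u ⬝ᵥ z| ≤ s
  have hCS : |u ⬝ᵥ z| ≤ s := by
    have h1 : u ⬝ᵥ z ≤ s := by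
      calc u ⬝ᵥ z = ∑ i, u i * z i := rfl
        _ ≤ Real.sqrt (∑ i, (u i) ^ 2) * Real.sqrt (∑ i, (z i) ^ 2) :=
            Real.sum_mul_le_sqrt_mul_sqrt _ _ _
        _ = s := by rw [hunit, one_mul]; exact hroot
    have h2 : -(u ⬝ᵥ z) ≤ s := by
      calc -(u ⬝ᵥ z) = ∑ i, (-u) i * z i := by
            simp [dotProduct, Finset.sum_neg_distrib]
        _ ≤ Real.sqrt (∑ i, ((-u) i) ^ 2) * Real.sqrt (∑ i, (z i) ^ 2) :=
            Real.sum_mul_le_sqrt_mul_sqrt _ _ _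
        _ = s := by simp only [Pi.neg_apply, neg_sq]; rw [hunit, one_mul]; exact hroot
    exact abs_le.2 ⟨neg_le.1 h2, h1⟩
  have hkey : |u ⬝ᵥ b| ≤ (δ - ζ) * s := by
    rw [hub, abs_mul, abs_of_pos (by linarith : (0:ℝ) < δ - ζ)]
    exact mul_le_mul_of_nonneg_left hCS (by linarith)
  have : |u ⬝ᵥ b| / s ≤ δ - ζ := (div_le_iff₀ hs).2 hkey
  linarith
end
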